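/- arXiv:1909.02748 — 6 statements merged into one kernel-verified Lean document; each statement's English description precedes it below -/
import Mathlib

section
/- Let M₁₁, M₁₂, M₂₁, M₂₂ be m₂×n₂ complex matrices whose linear span has dimension 3. Then rank(fromBlocks M₁₁ M₁₂ M₂₁ M₂₂) ≤ 3 · rank(fromBlocks M₁₁ M₂₁ M₁₂ M₂₂). (That is, Conjecture 1 holds for 2×2 block matrices of Schmidt rank three.) -/
open Matrix

private lemma my_rank_add_le {m n : Type*} [Fintype m] [Fintype n] [DecidableEq n]
    (A B : Matrix m n ℂ) : (A + B).rank ≤ A.rank + B.rank := by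
  classical
  have h : LinearMap.range (A + B).mulVecLin ≤
      LinearMap.range A.mulVecLin ⊔ LinearMap.range B.mulVecLin := by
    rw [Matrix.mulVecLin_add]
    rintro x ⟨y, rfl⟩
    exact Submodule.add_mem_sup ⟨y, rfl⟩ ⟨y, rfl⟩
  exact (Submodule.finrank_mono h).trans
    (Submodule.finrank_add_le_finrank_add_finrank _ _)

private lemma key3 {m n : ℕ} (A B C D : Matrix (Fin m) (Fin n) ℂ) (a b c d : ℂ)
    (ha : a ≠ 0) (hrel : a • A + b • B + c • C + d • D = 0) :
    ∃ (P₁ P₂ P₃ : Matrix (Fin m ⊕ Fin m) (Fin m ⊕ Fin m) ℂ)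
      (Q₁ Q₂ Q₃ : Matrix (Fin n ⊕ Fin n) (Fin n ⊕ Fin n) ℂ),
      fromBlocks A B C D =
        P₁ * fromBlocks A C B D * Q₁ + P₂ * fromBlocks A C B D * Q₂ +
          P₃ * fromBlocks A C B D * Q₃ := by
  refine ⟨fromBlocks 0 1 0 0, fromBlocks ((-(c/a)) • 1) 0 1 0, fromBlocks 0 0 0 1,
    fromBlocks ((-(b/a)) • 1) 1 ((-(d/a)) • 1) 0, fromBlocks 0 0 1 0, fromBlocks 0 0 0 1, ?_⟩
  have h1 : a • A = -(b • B + c • C + d • D) := by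
    rw [eq_neg_iff_add_eq_zero, ← add_assoc, ← add_assoc]
    exact hrel
  have hA : A = (-(b/a)) • B + ((-(c/a)) • C + (-(d/a)) • D) := by
    have h2 := congrArg (fun X => a⁻¹ • X) h1
    simp only [smul_smul, inv_mul_cancel₀ ha, one_smul, smul_neg, smul_add] at h2
    rw [h2]
    match_scalars <;> field_simp
  have hblock : fromBlocks A B C D =
      fromBlocks ((-(b/a)) • B + ((-(c/a)) • C + (-(d/a)) • D)) B C D := by rw [← hA]
  rw [hblock]
  simp only [Matrix.fromBlocks_multiply, Matrix.fromBlocks_add, Matrix.smul_mul,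
    Matrix.mul_smul, Matrix.one_mul, Matrix.mul_one, Matrix.zero_mul, Matrix.mul_zero,
    add_zero, zero_add, smul_zero]
  congr 1 <;> abel

theorem stmt1 (m₂ n₂ : ℕ)
    (M₁₁ M₁₂ M₂₁ M₂₂ : Matrix (Fin m₂) (Fin n₂) ℂ)
    (hspan : Module.finrank ℂ
      ↥(Submodule.span ℂ ({M₁₁, M₁₂, M₂₁, M₂₂} : Set (Matrix (Fin m₂) (Fin n₂) ℂ))) = 3) :
    (Matrix.fromBlocks M₁₁ M₁₂ M₂₁ M₂₂).rank ≤ 3 * (Matrix.fromBlocks M₁₁ M₂₁ M₁₂ M₂₂).rank := by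
  classical
  set Aγ := Matrix.fromBlocks M₁₁ M₂₁ M₁₂ M₂₂ with hAγ
  -- Step 1: the four blocks are linearly dependent
  have hne : ¬ LinearIndependent ℂ ![M₁₁, M₁₂, M₂₁, M₂₂] := by
    intro h
    have h4 := finrank_span_eq_card h
    rw [show Set.range ![M₁₁, M₁₂, M₂₁, M₂₂] =
        ({M₁₁, M₁₂, M₂₁, M₂₂} : Set (Matrix (Fin m₂) (Fin n₂) ℂ)) from ?_] at h4
    · rw [hspan] at h4; simp at h4
    · ext x
      simp only [Set.mem_range, Set.mem_insert_iff, Set.mem_singleton_iff]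
      constructor
      · rintro ⟨i, rfl⟩; fin_cases i <;> simp
      · rintro (rfl | rfl | rfl | rfl)
        exacts [⟨0, by simp⟩, ⟨1, by simp⟩, ⟨2, by simp⟩, ⟨3, by simp⟩]
  obtain ⟨g, hg, i, hi⟩ := Fintype.not_linearIndependent_iff.mp hne
  have hsum : g 0 • M₁₁ + g 1 • M₁₂ + g 2 • M₂₁ + g 3 • M₂₂ = 0 := by
    have := hg
    rw [Fin.sum_univ_four] at this
    simpa using this
  -- Step 2: decompose the block matrix as a sum of three products through Aγ
  obtain ⟨P₁, P₂, P₃, Q₁, Q₂, Q₃, hdec⟩ :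
      ∃ (P₁ P₂ P₃ : Matrix (Fin m₂ ⊕ Fin m₂) (Fin m₂ ⊕ Fin m₂) ℂ)
        (Q₁ Q₂ Q₃ : Matrix (Fin n₂ ⊕ Fin n₂) (Fin n₂ ⊕ Fin n₂) ℂ),
        Matrix.fromBlocks M₁₁ M₁₂ M₂₁ M₂₂ =
          P₁ * Aγ * Q₁ + P₂ * Aγ * Q₂ + P₃ * Aγ * Q₃ := by
    set Vm : Matrix (Fin m₂ ⊕ Fin m₂) (Fin m₂ ⊕ Fin m₂) ℂ := fromBlocks 0 1 1 0 with hVm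
    set Wn : Matrix (Fin n₂ ⊕ Fin n₂) (Fin n₂ ⊕ Fin n₂) ℂ := fromBlocks 0 1 1 0 with hWn
    fin_cases i
    · -- pivot g 0
      exact key3 M₁₁ M₁₂ M₂₁ M₂₂ _ _ _ _ hi hsum
    · -- pivot g 1
      have hrel : g 1 • M₁₂ + g 0 • M₁₁ + g 3 • M₂₂ + g 2 • M₂₁ = 0 := by
        rw [← hsum]; abel
      obtain ⟨P₁, P₂, P₃, Q₁, Q₂, Q₃, hk⟩ := key3 M₁₂ M₁₁ M₂₂ M₂₁ _ _ _ _ hi hrel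
      have hX : fromBlocks M₁₂ M₂₂ M₁₁ M₂₁ = Vm * Aγ := by
        rw [hVm, hAγ]
        simp [Matrix.fromBlocks_multiply]
      have hB : Matrix.fromBlocks M₁₁ M₁₂ M₂₁ M₂₂ = fromBlocks M₁₂ M₁₁ M₂₂ M₂₁ * Wn := by
        rw [hWn]
        simp [Matrix.fromBlocks_multiply]
      refine ⟨P₁ * Vm, P₂ * Vm, P₃ * Vm, Q₁ * Wn, Q₂ * Wn, Q₃ * Wn, ?_⟩
      rw [hB, hk, hX]
      simp only [Matrix.add_mul, Matrix.mul_add, Matrix.mul_assoc]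
    · -- pivot g 2
      have hrel : g 2 • M₂₁ + g 3 • M₂₂ + g 0 • M₁₁ + g 1 • M₁₂ = 0 := by
        rw [← hsum]; abel
      obtain ⟨P₁, P₂, P₃, Q₁, Q₂, Q₃, hk⟩ := key3 M₂₁ M₂₂ M₁₁ M₁₂ _ _ _ _ hi hrel
      have hX : fromBlocks M₂₁ M₁₁ M₂₂ M₁₂ = Aγ * Wn := by
        rw [hWn, hAγ]
        simp [Matrix.fromBlocks_multiply]
      have hB : Matrix.fromBlocks M₁₁ M₁₂ M₂₁ M₂₂ = Vm * fromBlocks M₂₁ M₂₂ M₁₁ M₁₂ := by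
        rw [hVm]
        simp [Matrix.fromBlocks_multiply]
      refine ⟨Vm * P₁, Vm * P₂, Vm * P₃, Wn * Q₁, Wn * Q₂, Wn * Q₃, ?_⟩
      rw [hB, hk, hX]
      simp only [Matrix.add_mul, Matrix.mul_add, Matrix.mul_assoc]
    · -- pivot g 3
      have hrel : g 3 • M₂₂ + g 2 • M₂₁ + g 1 • M₁₂ + g 0 • M₁₁ = 0 := by
        rw [← hsum]; abel
      obtain ⟨P₁, P₂, P₃, Q₁, Q₂, Q₃, hk⟩ := key3 M₂₂ M₂₁ M₁₂ M₁₁ _ _ _ _ hi hrel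
      have hX : fromBlocks M₂₂ M₁₂ M₂₁ M₁₁ = Vm * Aγ * Wn := by
        rw [hVm, hWn, hAγ]
        simp [Matrix.fromBlocks_multiply]
      have hB : Matrix.fromBlocks M₁₁ M₁₂ M₂₁ M₂₂ =
          Vm * fromBlocks M₂₂ M₂₁ M₁₂ M₁₁ * Wn := by
        rw [hVm, hWn]
        simp [Matrix.fromBlocks_multiply]
      refine ⟨Vm * P₁ * Vm, Vm * P₂ * Vm, Vm * P₃ * Vm,
        Wn * Q₁ * Wn, Wn * Q₂ * Wn, Wn * Q₃ * Wn, ?_⟩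
      rw [hB, hk, hX]
      simp only [Matrix.add_mul, Matrix.mul_add, Matrix.mul_assoc]
  -- Step 3: rank bound
  rw [hdec]
  have r1 : (P₁ * Aγ * Q₁).rank ≤ Aγ.rank :=
    (Matrix.rank_mul_le_left _ _).trans (Matrix.rank_mul_le_right _ _)
  have r2 : (P₂ * Aγ * Q₂).rank ≤ Aγ.rank :=
    (Matrix.rank_mul_le_left _ _).trans (Matrix.rank_mul_le_right _ _)
  have r3 : (P₃ * Aγ * Q₃).rank ≤ Aγ.rank :=
    (Matrix.rank_mul_le_left _ _).trans (Matrix.rank_mul_le_right _ _)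
  have h12 : (P₁ * Aγ * Q₁ + P₂ * Aγ * Q₂).rank ≤
      (P₁ * Aγ * Q₁).rank + (P₂ * Aγ * Q₂).rank := my_rank_add_le _ _
  have h123 : (P₁ * Aγ * Q₁ + P₂ * Aγ * Q₂ + P₃ * Aγ * Q₃).rank ≤
      (P₁ * Aγ * Q₁ + P₂ * Aγ * Q₂).rank + (P₃ * Aγ * Q₃).rank := my_rank_add_le _ _
  omega
end

section
/- Let M₁₁, M₁₂, M₂₁, M₂₂ be m₂×n₂ complex matrices whose linear span has dimension 3, and let M = fromBlocks M₁₁ M₁₂ M₂₁ M₂₂. Then there exist an invertible 2×2 complex matrix A, an invertible m₂×m₂ complex matrix B, an invertible 2×2 complex matrix C, an invertible n₂×n₂ complex matrix D, a natural number k ≤ min(m₂,n₂), a complex number w, and m₂×n₂ complex matrices N₁₂, N₂₁ such that (A ⊗ B) · M · (C ⊗ D) = fromBlocks N₁₁ N₁₂ N₂₁ (w • N₁₁), where N₁₁ is the m₂×n₂ matrix whose (i,j) entry is 1 if i = j < k and 0 otherwise (so rank N₁₁ = k). -/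
open Matrix Kronecker

/-- The equivalence `Fin 2 × Fin m ≃ Fin m ⊕ Fin m`, matching the block structure of
`fromBlocks` with the index structure of a Kronecker product with a `2×2` factor. -/
def blockEquiv (m : ℕ) : Fin 2 × Fin m ≃ Fin m ⊕ Fin m :=
  (Equiv.prodCongr finTwoEquiv (Equiv.refl (Fin m))).trans (Equiv.boolProdEquivSum (Fin m))

set_option maxHeartbeats 1000000

lemma rankone (S : Matrix (Fin 2) (Fin 2) ℂ)
    (hdet : S 0 0 * S 1 1 - S 0 1 * S 1 0 = 0) :
    ∃ u v : Fin 2 → ℂ, ∀ p q, S p q = u p * v q := by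
  by_cases h00 : S 0 0 ≠ 0
  · refine ⟨![S 0 0, S 1 0], ![1, S 0 1 / S 0 0], fun p q => ?_⟩
    fin_cases p <;> fin_cases q <;> simp <;> field_simp <;>
      first
        | linear_combination (-1 : ℂ) * hdet
        | linear_combination (2 : ℂ) * hdet
        | linear_combination hdet
        | linear_combination (-2 : ℂ) * hdet
  · push_neg at h00
    by_cases h01 : S 0 1 = 0
    · refine ⟨![0, 1], ![S 1 0, S 1 1], fun p q => ?_⟩
      fin_cases p <;> fin_cases q <;> simp [h00, h01]
    · have h10 : S 1 0 = 0 := by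
        have := hdet
        rw [h00] at this
        simp only [zero_mul, zero_sub, neg_eq_zero] at this
        rcases mul_eq_zero.mp this with h | h
        · exact absurd h h01
        · exact h
      refine ⟨![S 0 1, S 1 1], ![0, 1], fun p q => ?_⟩
      fin_cases p <;> fin_cases q <;> simp [h00, h10]

lemma kron_block {m : ℕ} (A : Matrix (Fin 2) (Fin 2) ℂ) (B : Matrix (Fin m) (Fin m) ℂ) :
    (A ⊗ₖ B).submatrix (blockEquiv m).symm (blockEquiv m).symm
      = Matrix.fromBlocks (A 0 0 • B) (A 0 1 • B) (A 1 0 • B) (A 1 1 • B) := by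
  ext i j
  cases i <;> cases j <;>
    simp [blockEquiv, Matrix.fromBlocks, Matrix.submatrix_apply, Matrix.kroneckerMap_apply] <;>
      exact Or.inl rfl

lemma three_mul {m n : ℕ} (A C : Matrix (Fin 2) (Fin 2) ℂ)
    (B : Matrix (Fin m) (Fin m) ℂ) (D : Matrix (Fin n) (Fin n) ℂ)
    (M11 M12 M21 M22 : Matrix (Fin m) (Fin n) ℂ) :
    Matrix.fromBlocks (A 0 0 • B) (A 0 1 • B) (A 1 0 • B) (A 1 1 • B) *
      Matrix.fromBlocks M11 M12 M21 M22 *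
      Matrix.fromBlocks (C 0 0 • D) (C 0 1 • D) (C 1 0 • D) (C 1 1 • D)
    = Matrix.fromBlocks
        (B * ((A 0 0 * C 0 0) • M11 + (A 0 0 * C 1 0) • M12 + (A 0 1 * C 0 0) • M21 + (A 0 1 * C 1 0) • M22) * D)
        (B * ((A 0 0 * C 0 1) • M11 + (A 0 0 * C 1 1) • M12 + (A 0 1 * C 0 1) • M21 + (A 0 1 * C 1 1) • M22) * D)
        (B * ((A 1 0 * C 0 0) • M11 + (A 1 0 * C 1 0) • M12 + (A 1 1 * C 0 0) • M21 + (A 1 1 * C 1 0) • M22) * D)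
        (B * ((A 1 0 * C 0 1) • M11 + (A 1 0 * C 1 1) • M12 + (A 1 1 * C 0 1) • M21 + (A 1 1 * C 1 1) • M22) * D) := by
  rw [Matrix.fromBlocks_multiply, Matrix.fromBlocks_multiply]
  rw [Matrix.fromBlocks_inj]
  refine ⟨?_, ?_, ?_, ?_⟩ <;>
  · simp only [Matrix.smul_mul, Matrix.mul_smul, Matrix.mul_add, Matrix.add_mul,
      smul_smul, Matrix.mul_assoc, smul_add]
    module

lemma rank_normal_form {m n : ℕ} (M : Matrix (Fin m) (Fin n) ℂ) :
    ∃ (B : Matrix (Fin m) (Fin m) ℂ) (D : Matrix (Fin n) (Fin n) ℂ) (k : ℕ),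
      IsUnit B ∧ IsUnit D ∧ k ≤ min m n ∧
      B * M * D = Matrix.of (fun (i : Fin m) (j : Fin n) =>
        if ((i : ℕ) = (j : ℕ) ∧ (i : ℕ) < k) then (1 : ℂ) else 0) := by
  classical
  set en := Pi.basisFun ℂ (Fin n) with hen
  set em := Pi.basisFun ℂ (Fin m) with hem
  set f : (Fin n → ℂ) →ₗ[ℂ] (Fin m → ℂ) := Matrix.toLin en em M with hf
  set K := LinearMap.ker f with hK
  set Rg := LinearMap.range f with hRg
  obtain ⟨W, hW⟩ := Submodule.exists_isCompl K
  obtain ⟨W', hW'⟩ := Submodule.exists_isCompl Rg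
  set k := Module.finrank ℂ Rg with hk
  have hdimn : Module.finrank ℂ (Fin n → ℂ) = n := Module.finrank_fin_fun ℂ
  have hdimm : Module.finrank ℂ (Fin m → ℂ) = m := Module.finrank_fin_fun ℂ
  have hkn : k ≤ n := hdimn ▸ LinearMap.finrank_range_le f
  have hkm : k ≤ m := hdimm ▸ Submodule.finrank_le Rg
  set g : W →ₗ[ℂ] Rg := (f.domRestrict W).codRestrict Rg
    (fun x => LinearMap.mem_range_self f x.1) with hg
  have hgapp : ∀ x : W, (g x : Fin m → ℂ) = f x.1 := fun x => rfl
  have hginj : Function.Injective g := by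
    rw [injective_iff_map_eq_zero]
    intro x hx
    have hxK : (x : Fin n → ℂ) ∈ K ⊓ W := by
      constructor
      · have : (g x : Fin m → ℂ) = 0 := by rw [hx]; rfl
        rw [hgapp] at this
        exact LinearMap.mem_ker.mpr this
      · exact x.2
    rw [hW.inf_eq_bot] at hxK
    exact Subtype.ext (by simpa using hxK)
  have hgsurj : Function.Surjective g := by
    rintro ⟨y, hy⟩
    obtain ⟨x, hx⟩ := hy
    have hx' : x ∈ K ⊔ W := by rw [hW.sup_eq_top]; trivial
    obtain ⟨u, hu, w, hw, rfl⟩ := Submodule.mem_sup.mp hx'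
    refine ⟨⟨w, hw⟩, Subtype.ext ?_⟩
    rw [hgapp]
    have : f u = 0 := LinearMap.mem_ker.mp hu
    simp only [← hx, map_add, this, zero_add]
  set e : W ≃ₗ[ℂ] Rg := LinearEquiv.ofBijective g ⟨hginj, hgsurj⟩ with he
  have hWk : Module.finrank ℂ W = k := e.finrank_eq
  have hKR : Module.finrank ℂ Rg + Module.finrank ℂ K = n := by
    rw [LinearMap.finrank_range_add_finrank_ker f, hdimn]
  have hKnk : Module.finrank ℂ K = n - k := by omega
  have hRW' : Module.finrank ℂ Rg + Module.finrank ℂ W' = m := by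
    rw [Submodule.finrank_add_eq_of_isCompl hW', hdimm]
  have hW'mk : Module.finrank ℂ W' = m - k := by omega
  set bW : Module.Basis (Fin k) ℂ W := Module.finBasisOfFinrankEq ℂ W hWk with hbW
  set bK : Module.Basis (Fin (n - k)) ℂ K := Module.finBasisOfFinrankEq ℂ K hKnk with hbK
  set bW' : Module.Basis (Fin (m - k)) ℂ W' := Module.finBasisOfFinrankEq ℂ W' hW'mk with hbW'
  set bR : Module.Basis (Fin k) ℂ Rg := bW.map e with hbR
  set bV : Module.Basis (Fin n) ℂ (Fin n → ℂ) :=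
    ((bW.prod bK).map (Submodule.prodEquivOfIsCompl W K hW.symm)).reindex
      (finSumFinEquiv.trans (finCongr (Nat.add_sub_cancel' hkn))) with hbV
  set bU : Module.Basis (Fin m) ℂ (Fin m → ℂ) :=
    ((bR.prod bW').map (Submodule.prodEquivOfIsCompl Rg W' hW')).reindex
      (finSumFinEquiv.trans (finCongr (Nat.add_sub_cancel' hkm))) with hbU
  have hUnit1 : IsUnit (bU.toMatrix em) := by
    letI := bU.invertibleToMatrix em
    exact isUnit_of_invertible _
  have hUnit2 : IsUnit (en.toMatrix bV) := by
    letI := en.invertibleToMatrix bV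
    exact isUnit_of_invertible _
  refine ⟨bU.toMatrix em, en.toMatrix bV, k, hUnit1, hUnit2, le_min hkm hkn, ?_⟩
  have key : bU.toMatrix em * M * en.toMatrix bV = LinearMap.toMatrix bV bU f := by
    conv_lhs => rw [← LinearMap.toMatrix_toLin en em M]
    exact basis_toMatrix_mul_linearMap_toMatrix_mul_basis_toMatrix bV en bU em f
  rw [key]
  -- bU at small indices
  have hbUsmall : ∀ (i : Fin m) (hi : (i : ℕ) < k), bU i = (bR ⟨i, hi⟩ : Fin m → ℂ) := by
    intro i hi
    rw [Module.Basis.reindex_apply, Module.Basis.map_apply]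
    have hsymm : (finSumFinEquiv.trans (finCongr (Nat.add_sub_cancel' hkm))).symm i
        = Sum.inl ⟨i, hi⟩ := by
      rw [Equiv.symm_trans_apply]
      have : (finCongr (Nat.add_sub_cancel' hkm)).symm i
          = Fin.castAdd (m - k) ⟨i, hi⟩ := by
        ext; simp
      rw [this, finSumFinEquiv_symm_apply_castAdd]
    rw [hsymm]
    have hpr : (bR.prod bW') (Sum.inl ⟨i, hi⟩) = (bR ⟨i, hi⟩, (0 : W')) := by
      ext1
      · exact Module.Basis.prod_apply_inl_fst _ _ _
      · exact Module.Basis.prod_apply_inl_snd _ _ _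
    rw [hpr, Submodule.coe_prodEquivOfIsCompl']
    simp
  have hfbV : ∀ (j : Fin n),
      (∀ hj : (j : ℕ) < k, f (bV j) = (bR ⟨j, hj⟩ : Fin m → ℂ)) ∧
      (k ≤ (j : ℕ) → f (bV j) = 0) := by
    intro j
    constructor
    · intro hj
      rw [Module.Basis.reindex_apply, Module.Basis.map_apply]
      have hsymm : (finSumFinEquiv.trans (finCongr (Nat.add_sub_cancel' hkn))).symm j
          = Sum.inl ⟨j, hj⟩ := by
        rw [Equiv.symm_trans_apply]
        have : (finCongr (Nat.add_sub_cancel' hkn)).symm j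
            = Fin.castAdd (n - k) ⟨j, hj⟩ := by ext; simp
        rw [this, finSumFinEquiv_symm_apply_castAdd]
      rw [hsymm]
      have hpr : (bW.prod bK) (Sum.inl ⟨j, hj⟩) = (bW ⟨j, hj⟩, (0 : K)) := by
        ext1
        · exact Module.Basis.prod_apply_inl_fst _ _ _
        · exact Module.Basis.prod_apply_inl_snd _ _ _
      rw [hpr, Submodule.coe_prodEquivOfIsCompl']
      simp only [ZeroMemClass.coe_zero, add_zero]
      have : f (bW ⟨j, hj⟩ : Fin n → ℂ) = (g (bW ⟨j, hj⟩) : Fin m → ℂ) := (hgapp _).symm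
      rw [this]
      rfl
    · intro hj
      rw [Module.Basis.reindex_apply, Module.Basis.map_apply]
      have hsymm : (finSumFinEquiv.trans (finCongr (Nat.add_sub_cancel' hkn))).symm j
          = Sum.inr ⟨(j : ℕ) - k, by omega⟩ := by
        rw [Equiv.symm_trans_apply]
        have : (finCongr (Nat.add_sub_cancel' hkn)).symm j
            = Fin.natAdd k ⟨(j : ℕ) - k, by omega⟩ := by ext; simp; omega
        rw [this, finSumFinEquiv_symm_apply_natAdd]
      rw [hsymm]
      have hpr : (bW.prod bK) (Sum.inr ⟨(j : ℕ) - k, by omega⟩)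
          = ((0 : W), bK ⟨(j : ℕ) - k, by omega⟩) := by
        ext1
        · exact Module.Basis.prod_apply_inr_fst _ _ _
        · exact Module.Basis.prod_apply_inr_snd _ _ _
      rw [hpr, Submodule.coe_prodEquivOfIsCompl']
      simp only [ZeroMemClass.coe_zero, zero_add]
      exact LinearMap.mem_ker.mp (bK ⟨(j : ℕ) - k, by omega⟩).2
  ext i j
  rw [LinearMap.toMatrix_apply]
  rcases lt_or_ge (j : ℕ) k with hj | hj
  · rw [(hfbV j).1 hj]
    have : (bR ⟨j, hj⟩ : Fin m → ℂ) = bU ⟨(j : ℕ), hj.trans_le hkm⟩ :=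
      (hbUsmall ⟨(j : ℕ), hj.trans_le hkm⟩ hj).symm
    rw [this, Module.Basis.repr_self_apply]
    by_cases hij : (i : ℕ) = (j : ℕ)
    · have hi : i = (⟨(j : ℕ), hj.trans_le hkm⟩ : Fin m) := Fin.ext hij
      rw [if_pos hi.symm]
      have : (i : ℕ) < k := hij ▸ hj
      simp [Matrix.of_apply, hij, this, hj]
    · rw [if_neg (fun h => hij ((congrArg Fin.val h).symm))]
      simp [Matrix.of_apply, hij]
  · rw [(hfbV j).2 hj]
    have : ¬ ((i : ℕ) = (j : ℕ) ∧ (i : ℕ) < k) := by omega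
    simp [this, Matrix.of_apply]

theorem stmt2 (m₂ n₂ : ℕ)
    (M₁₁ M₁₂ M₂₁ M₂₂ : Matrix (Fin m₂) (Fin n₂) ℂ)
    (hspan : Module.finrank ℂ
      ↥(Submodule.span ℂ ({M₁₁, M₁₂, M₂₁, M₂₂} : Set (Matrix (Fin m₂) (Fin n₂) ℂ))) = 3) :
    ∃ (A : Matrix (Fin 2) (Fin 2) ℂ) (B : Matrix (Fin m₂) (Fin m₂) ℂ)
      (C : Matrix (Fin 2) (Fin 2) ℂ) (D : Matrix (Fin n₂) (Fin n₂) ℂ)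
      (k : ℕ) (w : ℂ) (N₁₂ N₂₁ : Matrix (Fin m₂) (Fin n₂) ℂ),
      IsUnit A ∧ IsUnit B ∧ IsUnit C ∧ IsUnit D ∧ k ≤ min m₂ n₂ ∧
      ((A ⊗ₖ B).submatrix (blockEquiv m₂).symm (blockEquiv m₂).symm) *
          (Matrix.fromBlocks M₁₁ M₁₂ M₂₁ M₂₂) *
          ((C ⊗ₖ D).submatrix (blockEquiv n₂).symm (blockEquiv n₂).symm)
        = Matrix.fromBlocks
            (Matrix.of fun (i : Fin m₂) (j : Fin n₂) =>
              if ((i : ℕ) = (j : ℕ) ∧ (i : ℕ) < k) then (1 : ℂ) else 0)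
            N₁₂ N₂₁
            (w • Matrix.of fun (i : Fin m₂) (j : Fin n₂) =>
              if ((i : ℕ) = (j : ℕ) ∧ (i : ℕ) < k) then (1 : ℂ) else 0) := by
  classical
  have hrange : Set.range ![M₁₁, M₁₂, M₂₁, M₂₂]
      = ({M₁₁, M₁₂, M₂₁, M₂₂} : Set (Matrix (Fin m₂) (Fin n₂) ℂ)) := by
    simp only [Matrix.range_cons, Matrix.range_empty]
    ext x
    simp
    tauto
  have hnli : ¬ LinearIndependent ℂ ![M₁₁, M₁₂, M₂₁, M₂₂] := by
    intro h
    have h4 := finrank_span_eq_card h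
    rw [hrange, hspan] at h4
    simp at h4
  rw [Fintype.not_linearIndependent_iff] at hnli
  obtain ⟨g, hgsum, i0, hgi0⟩ := hnli
  have hcomb : g 0 • M₁₁ + g 1 • M₁₂ + g 2 • M₂₁ + g 3 • M₂₂ = 0 := by
    have h := hgsum
    rw [Fin.sum_univ_four] at h
    simpa using h
  set L : Matrix (Fin 2) (Fin 2) ℂ := Matrix.of ![![g 0, g 1], ![g 2, g 3]] with hLdef
  have hL00 : L 0 0 = g 0 := rfl
  have hL01 : L 0 1 = g 1 := rfl
  have hL10 : L 1 0 = g 2 := rfl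
  have hL11 : L 1 1 = g 3 := rfl
  have hLpq : ∃ p q, L p q ≠ 0 := by
    fin_cases i0
    · exact ⟨0, 0, hgi0⟩
    · exact ⟨0, 1, hgi0⟩
    · exact ⟨1, 0, hgi0⟩
    · exact ⟨1, 1, hgi0⟩
  obtain ⟨a, a', c, c', w, t, hA, hC, hrel⟩ :
      ∃ (a a' c c' : Fin 2 → ℂ) (w t : ℂ),
        (a 0 * a' 1 - a 1 * a' 0 ≠ 0) ∧ (c 0 * c' 1 - c 1 * c' 0 ≠ 0) ∧
        (∀ p q, a' p * c' q = w * (a p * c q) + t * L p q) := by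
    obtain ⟨p, q, hpq⟩ := hLpq
    by_cases hdet : L 0 0 * L 1 1 - L 0 1 * L 1 0 = 0
    · obtain ⟨u, v, huv⟩ := rankone L hdet
      have hu : u 0 ≠ 0 ∨ u 1 ≠ 0 := by
        by_contra h
        push_neg at h
        apply hpq
        rw [huv p q]
        fin_cases p <;> simp [h.1, h.2]
      have hv : v 0 ≠ 0 ∨ v 1 ≠ 0 := by
        by_contra h
        push_neg at h
        apply hpq
        rw [huv p q]
        fin_cases q <;> simp [h.1, h.2]
      obtain ⟨a, ha⟩ : ∃ a : Fin 2 → ℂ, a 0 * u 1 - a 1 * u 0 ≠ 0 := by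
        rcases hu with h | h
        · exact ⟨![0, 1], by simpa using h⟩
        · exact ⟨![1, 0], by simpa using h⟩
      obtain ⟨c, hc⟩ : ∃ c : Fin 2 → ℂ, c 0 * v 1 - c 1 * v 0 ≠ 0 := by
        rcases hv with h | h
        · exact ⟨![0, 1], by simpa using h⟩
        · exact ⟨![1, 0], by simpa using h⟩
      exact ⟨a, u, c, v, 0, 1, ha, hc, fun p q => by rw [huv p q]; ring⟩
    · by_cases h11 : L 1 1 = 0
      · have h10 : L 1 0 ≠ 0 := by
          intro h
          apply hdet
          rw [h11, h]; ring
        set s : ℂ := (L 0 0 * L 1 1 - L 0 1 * L 1 0) / L 1 0 with hs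
        set S : Matrix (Fin 2) (Fin 2) ℂ :=
          Matrix.of ![![L 0 0, L 0 1 + s], ![L 1 0, L 1 1]] with hSdef
        have hSdet : S 0 0 * S 1 1 - S 0 1 * S 1 0 = 0 := by
          show L 0 0 * L 1 1 - (L 0 1 + s) * L 1 0 = 0
          rw [hs]
          field_simp
          ring
        obtain ⟨u, v, huv⟩ := rankone S hSdet
        have hS10 : S 1 0 = L 1 0 := rfl
        have huv10 : u 1 * v 0 ≠ 0 := by
          rw [← huv 1 0, hS10]; exact h10
        have hu1 : u 1 ≠ 0 := left_ne_zero_of_mul huv10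
        have hv0 : v 0 ≠ 0 := right_ne_zero_of_mul huv10
        refine ⟨![1, 0], u, ![0, 1], v, s, 1, by simpa using hu1, by simpa using hv0, ?_⟩
        intro p q
        rw [← huv p q]
        fin_cases p <;> fin_cases q <;> simp [hSdef] <;> ring
      · set s : ℂ := -(L 0 0 * L 1 1 - L 0 1 * L 1 0) / L 1 1 with hs
        set S : Matrix (Fin 2) (Fin 2) ℂ :=
          Matrix.of ![![L 0 0 + s, L 0 1], ![L 1 0, L 1 1]] with hSdef
        have hSdet : S 0 0 * S 1 1 - S 0 1 * S 1 0 = 0 := by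
          show (L 0 0 + s) * L 1 1 - L 0 1 * L 1 0 = 0
          rw [hs]
          field_simp
          ring
        obtain ⟨u, v, huv⟩ := rankone S hSdet
        have hS11 : S 1 1 = L 1 1 := rfl
        have huv11 : u 1 * v 1 ≠ 0 := by
          rw [← huv 1 1, hS11]; exact h11
        have hu1 : u 1 ≠ 0 := left_ne_zero_of_mul huv11
        have hv1 : v 1 ≠ 0 := right_ne_zero_of_mul huv11
        refine ⟨![1, 0], u, ![1, 0], v, s, 1, by simpa using hu1, by simpa using hv1, ?_⟩
        intro p q
        rw [← huv p q]
        fin_cases p <;> fin_cases q <;> simp [hSdef] <;> ring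
  set A : Matrix (Fin 2) (Fin 2) ℂ := Matrix.of ![a, a'] with hAdef
  set C : Matrix (Fin 2) (Fin 2) ℂ := (Matrix.of ![c, c'])ᵀ with hCdef
  have hAu : IsUnit A := by
    rw [Matrix.isUnit_iff_isUnit_det, Matrix.det_fin_two, isUnit_iff_ne_zero]
    simpa [hAdef] using hA
  have hCu : IsUnit C := by
    rw [Matrix.isUnit_iff_isUnit_det, hCdef, Matrix.det_transpose, Matrix.det_fin_two,
      isUnit_iff_ne_zero]
    simpa using hC
  set M' : Matrix (Fin m₂) (Fin n₂) ℂ :=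
    (a 0 * c 0) • M₁₁ + (a 0 * c 1) • M₁₂ + (a 1 * c 0) • M₂₁ + (a 1 * c 1) • M₂₂ with hM'def
  obtain ⟨B, D, k, hB, hD, hk, hBMD⟩ := rank_normal_form M'
  have hA00 : A 0 0 = a 0 := rfl
  have hA01 : A 0 1 = a 1 := rfl
  have hA10 : A 1 0 = a' 0 := rfl
  have hA11 : A 1 1 = a' 1 := rfl
  have hC00 : C 0 0 = c 0 := rfl
  have hC10 : C 1 0 = c 1 := rfl
  have hC01 : C 0 1 = c' 0 := rfl
  have hC11 : C 1 1 = c' 1 := rfl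
  have hM'' : (a' 0 * c' 0) • M₁₁ + (a' 0 * c' 1) • M₁₂ + (a' 1 * c' 0) • M₂₁
      + (a' 1 * c' 1) • M₂₂ = w • M' := by
    rw [hrel 0 0, hrel 0 1, hrel 1 0, hrel 1 1, hL00, hL01, hL10, hL11]
    calc (w * (a 0 * c 0) + t * g 0) • M₁₁ + (w * (a 0 * c 1) + t * g 1) • M₁₂
          + (w * (a 1 * c 0) + t * g 2) • M₂₁ + (w * (a 1 * c 1) + t * g 3) • M₂₂
        = w • M' + t • (g 0 • M₁₁ + g 1 • M₁₂ + g 2 • M₂₁ + g 3 • M₂₂) := by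
          rw [hM'def]; module
      _ = w • M' := by rw [hcomb, smul_zero, add_zero]
  refine ⟨A, B, C, D, k, w,
    B * ((a 0 * c' 0) • M₁₁ + (a 0 * c' 1) • M₁₂ + (a 1 * c' 0) • M₂₁ + (a 1 * c' 1) • M₂₂) * D,
    B * ((a' 0 * c 0) • M₁₁ + (a' 0 * c 1) • M₁₂ + (a' 1 * c 0) • M₂₁ + (a' 1 * c 1) • M₂₂) * D,
    hAu, hB, hCu, hD, hk, ?_⟩
  rw [kron_block, kron_block, three_mul, Matrix.fromBlocks_inj]
  refine ⟨?_, ?_, ?_, ?_⟩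
  · rw [hA00, hA01, hC00, hC10, ← hM'def]
    exact hBMD
  · rw [hA00, hA01, hC01, hC11]
  · rw [hA10, hA11, hC00, hC10]
  · rw [hA10, hA11, hC01, hC11, hM'', Matrix.mul_smul, Matrix.smul_mul, hBMD]
end

section
/- Let (M_{ij}), for i ∈ Fin m₁ and j ∈ Fin n₁, be an array of m₂×n₂ complex matrices, let M be the associated bipartite matrix and M^Γ its partial transpose. If the dimension of the linear span of the blocks {M_{ij}} equals min(m₁·n₁, m₂·n₂), then rank(M) ≤ min(m₁·n₁, m₂·n₂) · rank(M^Γ). -/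
open Matrix

/-- The bipartite matrix associated to an `m₁ × n₁` array of `m₂ × n₂` blocks. -/
def bipMatrix {m₁ n₁ m₂ n₂ : ℕ} (M : Fin m₁ → Fin n₁ → Matrix (Fin m₂) (Fin n₂) ℂ) :
    Matrix (Fin m₁ × Fin m₂) (Fin n₁ × Fin n₂) ℂ :=
  Matrix.of fun p q => M p.1 q.1 p.2 q.2

/-- The partial transpose of the bipartite matrix: each block is replaced by its transpose. -/
def bipMatrixPT {m₁ n₁ m₂ n₂ : ℕ} (M : Fin m₁ → Fin n₁ → Matrix (Fin m₂) (Fin n₂) ℂ) :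
    Matrix (Fin m₁ × Fin n₂) (Fin n₁ × Fin m₂) ℂ :=
  Matrix.of fun p q => M p.1 q.1 q.2 p.2

section Aux

variable {m n o : Type*} [Fintype m] [Fintype n] [Fintype o]

lemma myRank_add_le (A B : Matrix m n ℂ) : (A + B).rank ≤ A.rank + B.rank := by
  classical
  rw [Matrix.rank, Matrix.rank, Matrix.rank, Matrix.mulVecLin_add]
  refine le_trans (Submodule.finrank_mono ?_)
    (Submodule.finrank_add_le_finrank_add_finrank _ _)
  rintro x ⟨y, rfl⟩
  exact Submodule.add_mem_sup ⟨y, rfl⟩ ⟨y, rfl⟩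

lemma myRank_sum_le {ι : Type*} (s : Finset ι) (f : ι → Matrix m n ℂ) :
    (∑ i ∈ s, f i).rank ≤ ∑ i ∈ s, (f i).rank := by
  classical
  induction s using Finset.cons_induction with
  | empty => simp
  | cons a s ha ih =>
    rw [Finset.sum_cons, Finset.sum_cons]
    exact le_trans (myRank_add_le _ _) (Nat.add_le_add_left ih _)

lemma myRank_mul_mul_le {m' n' : Type*} [Fintype m'] [Fintype n']
    (U : Matrix m m' ℂ) (B : Matrix m' n' ℂ) (V : Matrix n' n ℂ) :
    (U * B * V).rank ≤ B.rank :=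
  le_trans (Matrix.rank_mul_le_left _ _) (Matrix.rank_mul_le_right _ _)

end Aux

lemma bip_bound1 {m₁ n₁ m₂ n₂ : ℕ} (M : Fin m₁ → Fin n₁ → Matrix (Fin m₂) (Fin n₂) ℂ) :
    (bipMatrix M).rank ≤ m₁ * n₁ * (bipMatrixPT M).rank := by
  classical
  set P : (Fin m₁ × Fin n₁) → Matrix (Fin m₁ × Fin m₂) (Fin n₁ × Fin n₂) ℂ :=
    fun ij => Matrix.of fun p q => if (p.1, q.1) = ij then M p.1 q.1 p.2 q.2 else 0 with hP
  have hsplit : bipMatrix M = ∑ ij : Fin m₁ × Fin n₁, P ij := by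
    ext p q
    simp [bipMatrix, hP, Matrix.sum_apply, Finset.sum_ite_eq]
  have hrank : ∀ ij : Fin m₁ × Fin n₁, (P ij).rank ≤ (bipMatrixPT M).rank := by
    intro ij
    have hfac : P ij =
        (Matrix.of fun (p : Fin m₁ × Fin m₂) (r : Fin n₁ × Fin m₂) =>
          (if p.1 = ij.1 then (1 : ℂ) else 0) * (if (ij.2, p.2) = r then 1 else 0)) *
        (bipMatrixPT M)ᵀ *
        (Matrix.of fun (c : Fin m₁ × Fin n₂) (q : Fin n₁ × Fin n₂) =>
          (if (ij.1, q.2) = c then (1 : ℂ) else 0) * (if q.1 = ij.2 then 1 else 0)) := by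
      ext p q
      simp only [hP, Matrix.mul_apply, Matrix.of_apply, Matrix.transpose_apply, ite_mul, mul_ite,
        one_mul, mul_one, zero_mul, mul_zero, Finset.sum_ite_eq, Finset.mem_univ, if_true,
        Finset.sum_ite_irrel, Finset.sum_const_zero]
      rcases eq_or_ne p.1 ij.1 with h1 | h1 <;> rcases eq_or_ne q.1 ij.2 with h2 | h2 <;>
        simp [h1, h2, bipMatrixPT, Prod.ext_iff]
    calc (P ij).rank ≤ ((bipMatrixPT M)ᵀ).rank := by rw [hfac]; exact myRank_mul_mul_le _ _ _
    _ = (bipMatrixPT M).rank := Matrix.rank_transpose _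
  calc (bipMatrix M).rank ≤ ∑ ij : Fin m₁ × Fin n₁, (P ij).rank := by
        rw [hsplit]; exact myRank_sum_le _ _
    _ ≤ ∑ _ij : Fin m₁ × Fin n₁, (bipMatrixPT M).rank := Finset.sum_le_sum fun i _ => hrank i
    _ = m₁ * n₁ * (bipMatrixPT M).rank := by
        simp [Finset.sum_const, Finset.card_univ, mul_comm, mul_assoc]

lemma bip_bound2 {m₁ n₁ m₂ n₂ : ℕ} (M : Fin m₁ → Fin n₁ → Matrix (Fin m₂) (Fin n₂) ℂ) :
    (bipMatrix M).rank ≤ m₂ * n₂ * (bipMatrixPT M).rank := by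
  classical
  set Q : (Fin m₂ × Fin n₂) → Matrix (Fin m₁ × Fin m₂) (Fin n₁ × Fin n₂) ℂ :=
    fun kl => Matrix.of fun p q => if (p.2, q.2) = kl then M p.1 q.1 p.2 q.2 else 0 with hQ
  have hsplit : bipMatrix M = ∑ kl : Fin m₂ × Fin n₂, Q kl := by
    ext p q
    simp [bipMatrix, hQ, Matrix.sum_apply, Finset.sum_ite_eq]
  have hrank : ∀ kl : Fin m₂ × Fin n₂, (Q kl).rank ≤ (bipMatrixPT M).rank := by
    intro kl
    have hfac : Q kl =
        (Matrix.of fun (p : Fin m₁ × Fin m₂) (r : Fin m₁ × Fin n₂) =>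
          (if p.2 = kl.1 then (1 : ℂ) else 0) * (if (p.1, kl.2) = r then 1 else 0)) *
        bipMatrixPT M *
        (Matrix.of fun (c : Fin n₁ × Fin m₂) (q : Fin n₁ × Fin n₂) =>
          (if (q.1, kl.1) = c then (1 : ℂ) else 0) * (if q.2 = kl.2 then 1 else 0)) := by
      ext p q
      simp only [hQ, Matrix.mul_apply, Matrix.of_apply, ite_mul, mul_ite,
        one_mul, mul_one, zero_mul, mul_zero, Finset.sum_ite_eq, Finset.mem_univ, if_true,
        Finset.sum_ite_irrel, Finset.sum_const_zero]
      rcases eq_or_ne p.2 kl.1 with h1 | h1 <;> rcases eq_or_ne q.2 kl.2 with h2 | h2 <;>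
        simp [h1, h2, bipMatrixPT, Prod.ext_iff]
    rw [hfac]; exact myRank_mul_mul_le _ _ _
  calc (bipMatrix M).rank ≤ ∑ kl : Fin m₂ × Fin n₂, (Q kl).rank := by
        rw [hsplit]; exact myRank_sum_le _ _
    _ ≤ ∑ _kl : Fin m₂ × Fin n₂, (bipMatrixPT M).rank := Finset.sum_le_sum fun i _ => hrank i
    _ = m₂ * n₂ * (bipMatrixPT M).rank := by
        simp [Finset.sum_const, Finset.card_univ, mul_comm, mul_assoc]

theorem stmt3 (m₁ n₁ m₂ n₂ : ℕ)
    (M : Fin m₁ → Fin n₁ → Matrix (Fin m₂) (Fin n₂) ℂ)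
    (hspan : Module.finrank ℂ
        ↥(Submodule.span ℂ (Set.range fun p : Fin m₁ × Fin n₁ => M p.1 p.2))
      = min (m₁ * n₁) (m₂ * n₂)) :
    (bipMatrix M).rank ≤ min (m₁ * n₁) (m₂ * n₂) * (bipMatrixPT M).rank := by
  rcases le_total (m₁ * n₁) (m₂ * n₂) with h | h
  · rw [min_eq_left h]; exact bip_bound1 M
  · rw [min_eq_right h]; exact bip_bound2 M
end

section
/- Let (M_{ij}), for i ∈ Fin m₁ and j ∈ Fin n₁, be an array of m₂×n₂ complex matrices whose linear span has dimension s (so the associated bipartite matrix M has Schmidt rank s), where s ≤ n₁. Suppose that for every row index i, the linear span of the blocks M_{i,1}, …, M_{i,n₁} in that row has dimension at most one. Then rank(M) ≤ s · rank(M^Γ). -/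
set_option maxHeartbeats 1000000
set_option synthInstance.maxHeartbeats 400000

open Matrix

namespace Stmt8Aux

open Submodule Module Set

variable {α β : Type*}

/-- Tensor-product-like bilinear map on function spaces. -/
noncomputable def tmulL (u : α → ℂ) : (β → ℂ) →ₗ[ℂ] (α × β → ℂ) where
  toFun v := fun p => u p.1 * v p.2
  map_add' v w := by funext p; simp [mul_add]
  map_smul' a v := by funext p; simp [smul_eq_mul]; ring

@[simp] lemma tmulL_apply (u : α → ℂ) (v : β → ℂ) (p : α × β) :
    tmulL u v p = u p.1 * v p.2 := rfl

lemma tmulL_zero_left (v : β → ℂ) : tmulL (0 : α → ℂ) v = 0 := by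
  funext p; simp

lemma tmulL_add_left (u u' : α → ℂ) (v : β → ℂ) :
    tmulL (u + u') v = tmulL u v + tmulL u' v := by
  funext p; simp [add_mul]

lemma tmulL_smul_left (a : ℂ) (u : α → ℂ) (v : β → ℂ) :
    tmulL (a • u) v = a • tmulL u v := by
  funext p; simp [smul_eq_mul]; ring

/-- Contraction against a functional in the first coordinate. -/
noncomputable def ctr (f : ((α → ℂ) →ₗ[ℂ] ℂ)) : (α × β → ℂ) →ₗ[ℂ] (β → ℂ) where
  toFun F := fun b => f (fun a => F (a, b))
  map_add' F G := by funext b; exact f.map_add (fun a => F (a, b)) (fun a => G (a, b))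
  map_smul' m F := by funext b; exact f.map_smul m (fun a => F (a, b))

@[simp] lemma ctr_tmulL (f : ((α → ℂ) →ₗ[ℂ] ℂ)) (u : α → ℂ) (v : β → ℂ) :
    ctr f (tmulL u v) = f u • v := by
  funext b
  show f (fun a => u a * v b) = f u * v b
  have h : (fun a => u a * v b) = v b • u := by
    funext a; simp [smul_eq_mul, mul_comm]
  rw [h, f.map_smul, smul_eq_mul, mul_comm]

/-- A dual functional equal to 1 at `v₀` and vanishing on `s`, given independence. -/
lemma exists_dual {V : Type*} [AddCommGroup V] [Module ℂ V] {s : Set V} {v₀ : V}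
    (hind : LinearIndependent ℂ ((↑) : ↥(insert v₀ s) → V)) (hv₀ : v₀ ∉ s) :
    ∃ f : V →ₗ[ℂ] ℂ, f v₀ = 1 ∧ ∀ v ∈ s, f v = 0 := by
  classical
  replace hind : LinearIndepOn ℂ id (insert v₀ s) := hind
  let b := Module.Basis.extend hind
  have hsub : insert v₀ s ⊆ hind.extend (Set.subset_univ _) := hind.subset_extend _
  have hv₀t : v₀ ∈ hind.extend (Set.subset_univ _) := hsub (Set.mem_insert _ _)
  obtain ⟨i₀, hval₀⟩ : ∃ i : ↥(hind.extend (Set.subset_univ _)), (i : V) = v₀ :=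
    ⟨⟨v₀, hv₀t⟩, rfl⟩
  have hb₀ : b i₀ = v₀ := by rw [Basis.extend_apply_self]; exact hval₀
  refine ⟨b.coord i₀, ?_, ?_⟩
  · have h2 : b.repr v₀ = b.repr (b i₀) := by rw [hb₀]
    rw [Basis.coord_apply, h2, Basis.repr_self]
    simp
  · intro v hv
    have hvt : v ∈ hind.extend (Set.subset_univ _) := hsub (Set.mem_insert_of_mem _ hv)
    obtain ⟨i, hval⟩ : ∃ i : ↥(hind.extend (Set.subset_univ _)), (i : V) = v :=
      ⟨⟨v, hvt⟩, rfl⟩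
    have hb : b i = v := by rw [Basis.extend_apply_self]; exact hval
    have hne : i ≠ i₀ := by
      intro h
      apply hv₀
      have hvv : v = v₀ := by rw [← hval, h, hval₀]
      rwa [hvv] at hv
    have h2 : b.repr v = b.repr (b i) := by rw [hb]
    rw [Basis.coord_apply, h2, Basis.repr_self, Finsupp.single_apply, if_neg hne]

/-- finrank of a finite sup is at most the sum of finranks. -/
lemma finrank_finset_sup_le {V : Type*} [AddCommGroup V] [Module ℂ V] [FiniteDimensional ℂ V]
    {ι : Type*} [DecidableEq ι] (t : Finset ι) (g : ι → Submodule ℂ V) :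
    finrank ℂ (t.sup g : Submodule ℂ V) ≤ ∑ i ∈ t, finrank ℂ (g i) := by
  induction t using Finset.induction_on with
  | empty => simp
  | @insert a t ha ih =>
      rw [Finset.sup_insert, Finset.sum_insert ha]
      exact (Submodule.finrank_add_le_finrank_add_finrank _ _).trans (by omega)

/-- Any element of the span of a set of "matrices" has all its rows in any submodule
containing all rows of members of the set. -/
lemma row_mem_of_mem_span {γ δ : Type*} {S : Set (γ → δ → ℂ)} {F : Submodule ℂ (δ → ℂ)}
    (hS : ∀ X ∈ S, ∀ k, X k ∈ F) :
    ∀ X ∈ Submodule.span ℂ S, ∀ k, X k ∈ F := by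
  intro X hX
  induction hX using Submodule.span_induction with
  | mem X hX => exact hS X hX
  | zero => intro k; exact F.zero_mem
  | add X Y _ _ hX hY => intro k; exact F.add_mem (hX k) (hY k)
  | smul a X _ hX => intro k; exact F.smul_mem a (hX k)

/-- rank of a matrix equals the dimension of the span of its rows. -/
lemma rank_eq_finrank_span_rows {γ δ : Type*} [Fintype γ] [Fintype δ] (N : Matrix γ δ ℂ) :
    N.rank = finrank ℂ (Submodule.span ℂ (Set.range fun k => N k)) := by
  rw [Matrix.rank_eq_finrank_span_row]; rfl

/-- Core counting lemma: independent vectors tensored with arbitrary subspaces. -/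
lemma sum_le_finrank_sup [Fintype α] [Fintype β] (Bf : Finset (α → ℂ))
    (hB : LinearIndependent ℂ ((↑) : ↥((Bf : Set (α → ℂ))) → (α → ℂ)))
    (C : (α → ℂ) → Submodule ℂ (β → ℂ)) :
    ∑ v ∈ Bf, finrank ℂ (C v) ≤
      finrank ℂ (Bf.sup (fun v => Submodule.map (tmulL v) (C v)) : Submodule ℂ (α × β → ℂ)) := by
  classical
  induction Bf using Finset.induction_on with
  | empty => simp
  | @insert v₀ B' hv₀ ih =>
      have hBset : ((insert v₀ B' : Finset (α → ℂ)) : Set (α → ℂ)) = insert v₀ ↑B' := by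
        simp
      rw [hBset] at hB
      have hv₀' : v₀ ∉ (B' : Set (α → ℂ)) := by simpa using hv₀
      obtain ⟨hB', hv₀sp⟩ := (linearIndepOn_id_insert hv₀').mp hB
      obtain ⟨f, hf1, hf0⟩ := exists_dual hB hv₀'
      set g : (α → ℂ) → Submodule ℂ (α × β → ℂ) := fun v => Submodule.map (tmulL v) (C v) with hg
      set Gall : Submodule ℂ (α × β → ℂ) := (insert v₀ B').sup g with hGall
      set Grest : Submodule ℂ (α × β → ℂ) := B'.sup g with hGrest
      have hrest_ker : Grest ≤ LinearMap.ker (ctr (β := β) f) := by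
        apply Finset.sup_le
        intro v hv
        rintro x ⟨y, hy, rfl⟩
        simp [LinearMap.mem_ker, ctr_tmulL, hf0 v hv]
      set φ : Gall →ₗ[ℂ] (β → ℂ) := (ctr (β := β) f).comp Gall.subtype with hφ
      have hrn : finrank ℂ (LinearMap.range φ) + finrank ℂ (LinearMap.ker φ)
          = finrank ℂ Gall := LinearMap.finrank_range_add_finrank_ker φ
      have hCv₀ : C v₀ ≤ LinearMap.range φ := by
        intro y hy
        have hmem : tmulL v₀ y ∈ Gall := by
          have h1 : g v₀ ≤ Gall := Finset.le_sup (Finset.mem_insert_self _ _)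
          exact h1 ⟨y, hy, rfl⟩
        refine ⟨⟨tmulL v₀ y, hmem⟩, ?_⟩
        show ctr f (tmulL v₀ y) = y
        rw [ctr_tmulL, hf1, one_smul]
      have h1 : finrank ℂ (C v₀) ≤ finrank ℂ (LinearMap.range φ) :=
        Submodule.finrank_mono hCv₀
      have hGrest_le : Grest ≤ Gall := Finset.sup_mono (Finset.subset_insert _ _)
      have h2 : finrank ℂ Grest ≤ finrank ℂ (LinearMap.ker φ) := by
        have hle : Submodule.comap Gall.subtype Grest ≤ LinearMap.ker φ := by
          intro x hx
          have : (x : α × β → ℂ) ∈ Grest := hx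
          simpa [hφ, LinearMap.mem_ker] using hrest_ker this
        calc finrank ℂ Grest
            = finrank ℂ (Submodule.comap Gall.subtype Grest) :=
              (LinearEquiv.finrank_eq (Submodule.comapSubtypeEquivOfLe hGrest_le)).symm
          _ ≤ finrank ℂ (LinearMap.ker φ) := Submodule.finrank_mono hle
      rw [Finset.sum_insert hv₀]
      calc finrank ℂ (C v₀) + ∑ v ∈ B', finrank ℂ (C v)
          ≤ finrank ℂ (LinearMap.range φ) + finrank ℂ (LinearMap.ker φ) := by
            have := ih hB'
            omega
        _ = finrank ℂ Gall := hrn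

end Stmt8Aux

open Stmt8Aux Submodule Module Set

theorem stmt8 (m₁ n₁ m₂ n₂ s : ℕ)
    (M : Fin m₁ → Fin n₁ → Matrix (Fin m₂) (Fin n₂) ℂ)
    (hspan : Module.finrank ℂ
        ↥(Submodule.span ℂ (Set.range fun p : Fin m₁ × Fin n₁ => M p.1 p.2)) = s)
    (hsn : s ≤ n₁)
    (hrows : ∀ i : Fin m₁,
      Module.finrank ℂ ↥(Submodule.span ℂ (Set.range (M i))) ≤ 1) :
    (bipMatrix M).rank ≤ s * (bipMatrixPT M).rank := by
  classical
  rcases Nat.eq_zero_or_pos m₁ with hm₁ | hm₁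
  · subst hm₁
    have h0 : (bipMatrix M).rank ≤ 0 := by
      simpa using (bipMatrix M).rank_le_card_height
    omega
  haveI : Nonempty (Fin m₁) := ⟨⟨0, hm₁⟩⟩
  set SM := Submodule.span ℂ (Set.range fun p : Fin m₁ × Fin n₁ => M p.1 p.2) with hSMdef
  -- Step 1: extract c and A
  have extract : ∀ i : Fin m₁, ∃ (Ai : Matrix (Fin m₂) (Fin n₂) ℂ) (ci : Fin n₁ → ℂ),
      (∀ j, M i j = ci j • Ai) ∧ Ai ∈ SM := by
    intro i
    by_cases h0 : ∀ j, M i j = 0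
    · exact ⟨0, 0, fun j => by simp [h0 j], SM.zero_mem⟩
    · push_neg at h0
      obtain ⟨j₀, hj₀⟩ := h0
      have hle : Submodule.span ℂ {M i j₀} ≤ Submodule.span ℂ (Set.range (M i)) :=
        Submodule.span_mono (by simp)
      have h1 : finrank ℂ (Submodule.span ℂ {M i j₀}) = 1 := finrank_span_singleton hj₀
      have heq : Submodule.span ℂ {M i j₀} = Submodule.span ℂ (Set.range (M i)) :=
        Submodule.eq_of_le_of_finrank_le hle (by rw [h1]; exact hrows i)
      have hmem : ∀ j, M i j ∈ Submodule.span ℂ {M i j₀} := by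
        intro j
        have : M i j ∈ Submodule.span ℂ (Set.range (M i)) := subset_span ⟨j, rfl⟩
        rwa [← heq] at this
      choose cc hcc using fun j => Submodule.mem_span_singleton.mp (hmem j)
      exact ⟨M i j₀, cc, fun j => (hcc j).symm, subset_span ⟨(i, j₀), rfl⟩⟩
  choose A c hMc hASM using extract
  set r : Fin m₁ → ℕ := fun i => (A i).rank with hrdef
  set S : ℕ → Set (Fin n₁ → ℂ) := fun σ => c '' {i | σ ≤ r i} with hSdef
  have hSanti : ∀ {σ τ : ℕ}, σ ≤ τ → S τ ⊆ S σ := by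
    intro σ τ h
    exact Set.image_mono (fun i hi => le_trans h hi)
  set R : ℕ := (Finset.univ.sup r) + 1 with hRdef
  have hSR : ∀ σ, R ≤ σ → S σ = ∅ := by
    intro σ hσ
    apply Set.eq_empty_iff_forall_notMem.mpr
    rintro v ⟨i, hi, rfl⟩
    have h2 : r i ≤ Finset.univ.sup r := Finset.le_sup (Finset.mem_univ i)
    simp only [Set.mem_setOf_eq] at hi
    omega
  -- Step 2: flag selection
  have L4 : ∀ d : ℕ, ∃ B : Set (Fin n₁ → ℂ), B ⊆ S (R - d) ∧
      LinearIndependent ℂ ((↑) : B → (Fin n₁ → ℂ)) ∧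
      ∀ σ, R - d ≤ σ → S σ ⊆ ↑(Submodule.span ℂ (B ∩ S σ)) := by
    intro d
    induction d with
    | zero =>
        refine ⟨∅, by simp, linearIndependent_empty _ _, ?_⟩
        intro σ hσ
        rw [hSR σ (by omega)]
        exact Set.empty_subset _
    | succ d ih =>
        obtain ⟨B, hBsub, hBind, hBsp⟩ := ih
        have hmono : S (R - d) ⊆ S (R - (d + 1)) := hSanti (by omega)
        obtain ⟨B', hB'sub, hBB', hspan', hind'⟩ :=
          exists_linearIndepOn_id_extension hBind (hBsub.trans hmono)
        refine ⟨B', hB'sub, hind', ?_⟩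
        intro σ hσ
        by_cases hcase : R - d ≤ σ
        · exact (hBsp σ hcase).trans
            (fun x hx => Submodule.span_mono (Set.inter_subset_inter_left _ hBB') hx)
        · have hσeq : σ = R - (d + 1) := by omega
          subst hσeq
          intro v hv
          have hBint : B' ∩ S (R - (d + 1)) = B' := Set.inter_eq_self_of_subset_left hB'sub
          rw [hBint]
          exact hspan' hv
  obtain ⟨B, hBsub0, hBind, hBsp0⟩ := L4 R
  have hRR : R - R = 0 := by omega
  rw [hRR] at hBsub0 hBsp0
  have hBsp : ∀ σ, S σ ⊆ ↑(Submodule.span ℂ (B ∩ S σ)) := fun σ => hBsp0 σ (Nat.zero_le _)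
  have hBfin : B.Finite := hBind.setFinite
  haveI : Fintype B := hBfin.fintype
  set Bf : Finset (Fin n₁ → ℂ) := B.toFinset with hBfdef
  have hBfcoe : (Bf : Set (Fin n₁ → ℂ)) = B := Set.coe_toFinset B
  set w : (Fin n₁ → ℂ) → ℕ := fun v => (Finset.univ.filter fun j => c j = v).sup r with hwdef
  have hSw : ∀ {σ : ℕ} {v}, v ∈ S σ → σ ≤ w v := by
    rintro σ v ⟨i, hi, rfl⟩
    simp only [Set.mem_setOf_eq] at hi
    exact le_trans hi (Finset.le_sup (by simp))
  have hwit : ∀ v ∈ B, ∃ j, c j = v ∧ r j = w v := by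
    intro v hv
    obtain ⟨i, -, rfl⟩ := hBsub0 hv
    have hne : (Finset.univ.filter fun j => c j = c i).Nonempty := ⟨i, by simp⟩
    obtain ⟨j, hj, hje⟩ := Finset.exists_mem_eq_sup _ hne r
    exact ⟨j, (Finset.mem_filter.mp hj).2, hje.symm⟩
  -- Step 3: T and its dimension bound
  set T : ℕ → Submodule ℂ (Fin n₂ → ℂ) :=
    fun ρ => Submodule.span ℂ {x | ∃ i k, r i ≤ ρ ∧ A i k = x} with hTdef
  have hTbound : ∀ ρ, finrank ℂ (T ρ) ≤ s * ρ := by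
    intro ρ
    obtain ⟨b, hbsub, hbspan, hbind⟩ :=
      exists_linearIndependent ℂ {X : Matrix (Fin m₂) (Fin n₂) ℂ | ∃ i, r i ≤ ρ ∧ A i = X}
    have hbfin : b.Finite := hbind.setFinite
    haveI : Fintype b := hbfin.fintype
    set F : Submodule ℂ (Fin n₂ → ℂ) :=
      b.toFinset.sup (fun X => Submodule.span ℂ (Set.range fun k => X k)) with hFdef
    have hrowsF : ∀ X ∈ Submodule.span ℂ b, ∀ k, X k ∈ F := by
      apply row_mem_of_mem_span
      intro X hX k
      have h1 : Submodule.span ℂ (Set.range fun k => X k) ≤ F := by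
        rw [hFdef]
        exact Finset.le_sup (f := fun X => Submodule.span ℂ (Set.range fun k => X k))
          ((Set.mem_toFinset (s := b)).mpr hX)
      exact h1 (subset_span ⟨k, rfl⟩)
    have hTle : T ρ ≤ F := by
      rw [hTdef]
      apply Submodule.span_le.mpr
      rintro x ⟨i, k, hiρ, rfl⟩
      have hAi : A i ∈ Submodule.span ℂ b := by
        rw [hbspan]
        exact subset_span ⟨i, hiρ, rfl⟩
      exact hrowsF _ hAi k
    have h2 : finrank ℂ F ≤ ∑ X ∈ b.toFinset,
        finrank ℂ (Submodule.span ℂ (Set.range fun k => X k)) :=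
      finrank_finset_sup_le _ _
    have h3 : ∀ X ∈ b.toFinset,
        finrank ℂ (Submodule.span ℂ (Set.range fun k => X k)) ≤ ρ := by
      intro X hX
      obtain ⟨i, hiρ, rfl⟩ := hbsub (Set.mem_toFinset.mp hX)
      rw [← rank_eq_finrank_span_rows]
      exact hiρ
    have hcard : b.toFinset.card ≤ s := by
      have hsp : Submodule.span ℂ b ≤ SM := by
        apply Submodule.span_le.mpr
        intro X hX
        obtain ⟨i, -, rfl⟩ := hbsub hX
        exact hASM i
      have hfr : finrank ℂ (Submodule.span ℂ b) ≤ s := by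
        rw [← hspan]
        exact Submodule.finrank_mono hsp
      rwa [finrank_span_set_eq_card hbind] at hfr
    calc finrank ℂ (T ρ) ≤ finrank ℂ F := Submodule.finrank_mono hTle
      _ ≤ ∑ X ∈ b.toFinset, finrank ℂ (Submodule.span ℂ (Set.range fun k => X k)) := h2
      _ ≤ ∑ _X ∈ b.toFinset, ρ := Finset.sum_le_sum h3
      _ = b.toFinset.card * ρ := by rw [Finset.sum_const, smul_eq_mul]
      _ ≤ s * ρ := Nat.mul_le_mul_right _ hcard
  -- Step 4: identify the two ranks with spans of rows
  set Zsp : Submodule ℂ (Fin n₁ × Fin n₂ → ℂ) :=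
    Submodule.span ℂ (Set.range fun p : Fin m₁ × Fin m₂ => tmulL (c p.1) (A p.1 p.2)) with hZdef
  set Gsp : Submodule ℂ (Fin n₁ × Fin m₂ → ℂ) :=
    Submodule.span ℂ (Set.range fun p : Fin m₁ × Fin n₂ => tmulL (c p.1) ((A p.1)ᵀ p.2)) with hGdef
  have hrankZ : (bipMatrix M).rank = finrank ℂ Zsp := by
    rw [rank_eq_finrank_span_rows]
    have hfun : (fun k => bipMatrix M k)
        = fun p : Fin m₁ × Fin m₂ => (tmulL (c p.1) (A p.1 p.2) : Fin n₁ × Fin n₂ → ℂ) := by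
      funext p q
      show M p.1 q.1 p.2 q.2 = c p.1 q.1 * A p.1 p.2 q.2
      rw [hMc p.1 q.1]
      rfl
    rw [hfun, hZdef]
  have hrankG : (bipMatrixPT M).rank = finrank ℂ Gsp := by
    rw [rank_eq_finrank_span_rows]
    have hfun : (fun k => bipMatrixPT M k)
        = fun p : Fin m₁ × Fin n₂ => (tmulL (c p.1) ((A p.1)ᵀ p.2) : Fin n₁ × Fin m₂ → ℂ) := by
      funext p q
      show M p.1 q.1 q.2 p.2 = c p.1 q.1 * (A p.1)ᵀ p.2 q.2
      rw [hMc p.1 q.1]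
      rfl
    rw [hfun, hGdef]
  -- Step 5: upper bound for Zsp
  have hZle : Zsp ≤ Bf.sup (fun v => Submodule.map (tmulL v) (T (w v))) := by
    rw [hZdef]
    apply Submodule.span_le.mpr
    rintro x ⟨p, rfl⟩
    have hci : c p.1 ∈ Submodule.span ℂ (B ∩ S (r p.1)) :=
      hBsp (r p.1) ⟨p.1, show r p.1 ≤ r p.1 from le_refl _, rfl⟩
    have key : ∀ u ∈ Submodule.span ℂ (B ∩ S (r p.1)),
        (tmulL u (A p.1 p.2) : Fin n₁ × Fin n₂ → ℂ)
          ∈ Bf.sup (fun v => Submodule.map (tmulL v) (T (w v))) := by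
      intro u hu
      induction hu using Submodule.span_induction with
      | mem v hv =>
          obtain ⟨hvB, hvS⟩ := hv
          have hx : A p.1 p.2 ∈ T (w v) := subset_span ⟨p.1, p.2, hSw hvS, rfl⟩
          have hmem : (tmulL v (A p.1 p.2) : Fin n₁ × Fin n₂ → ℂ)
              ∈ Submodule.map (tmulL v) (T (w v)) := ⟨_, hx, rfl⟩
          exact (Finset.le_sup (f := fun v => Submodule.map (tmulL v) (T (w v)))
            (Set.mem_toFinset.mpr hvB)) hmem
      | zero => rw [tmulL_zero_left]; exact Submodule.zero_mem _
      | add u u' _ _ h h' => rw [tmulL_add_left]; exact Submodule.add_mem _ h h'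
      | smul a u _ h => rw [tmulL_smul_left]; exact Submodule.smul_mem _ a h
    exact key _ hci
  -- Step 6: lower bound for Gsp
  choose! jf hjf1 hjf2 using hwit
  set Cfun : (Fin n₁ → ℂ) → Submodule ℂ (Fin m₂ → ℂ) := fun v =>
    Submodule.span ℂ (Set.range fun l => (A (jf v))ᵀ l) with hCfundef
  have hCfr : ∀ v ∈ Bf, finrank ℂ (Cfun v) = w v := by
    intro v hv
    have hvB : v ∈ B := Set.mem_toFinset.mp hv
    have h1 : Cfun v = Submodule.span ℂ (Set.range fun l => (A (jf v))ᵀ l) := rfl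
    rw [h1, ← rank_eq_finrank_span_rows ((A (jf v))ᵀ), Matrix.rank_transpose]
    exact hjf2 v hvB
  have hCle : ∀ v ∈ Bf, Submodule.map (tmulL v) (Cfun v) ≤ Gsp := by
    intro v hv
    have hvB : v ∈ B := Set.mem_toFinset.mp hv
    have h1 : Cfun v = Submodule.span ℂ (Set.range fun l => (A (jf v))ᵀ l) := rfl
    rw [h1, Submodule.map_span]
    apply Submodule.span_le.mpr
    rintro x ⟨y, ⟨l, rfl⟩, rfl⟩
    rw [hGdef]
    have heq : tmulL (c (jf v)) ((A (jf v))ᵀ l) = tmulL v ((A (jf v))ᵀ l) := by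
      rw [hjf1 v hvB]
    exact subset_span ⟨(jf v, l), heq⟩
  have hL3 : ∑ v ∈ Bf, finrank ℂ (Cfun v) ≤
      finrank ℂ (Bf.sup (fun v => Submodule.map (tmulL v) (Cfun v))
        : Submodule ℂ (Fin n₁ × Fin m₂ → ℂ)) := by
    apply sum_le_finrank_sup
    rw [hBfcoe]
    exact hBind
  have hGge : ∑ v ∈ Bf, w v ≤ finrank ℂ Gsp := by
    have h1 : ∑ v ∈ Bf, w v = ∑ v ∈ Bf, finrank ℂ (Cfun v) :=
      Finset.sum_congr rfl (fun v hv => (hCfr v hv).symm)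
    have h2 : (Bf.sup (fun v => Submodule.map (tmulL v) (Cfun v))
        : Submodule ℂ (Fin n₁ × Fin m₂ → ℂ)) ≤ Gsp := Finset.sup_le hCle
    rw [h1]
    exact hL3.trans (Submodule.finrank_mono h2)
  -- Step 7: conclude
  have hZfin : finrank ℂ Zsp ≤ s * ∑ v ∈ Bf, w v := by
    calc finrank ℂ Zsp
        ≤ finrank ℂ (Bf.sup (fun v => Submodule.map (tmulL v) (T (w v)))
            : Submodule ℂ (Fin n₁ × Fin n₂ → ℂ)) := Submodule.finrank_mono hZle
      _ ≤ ∑ v ∈ Bf, finrank ℂ (Submodule.map (tmulL v) (T (w v))) :=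
            finrank_finset_sup_le _ _
      _ ≤ ∑ v ∈ Bf, s * w v := Finset.sum_le_sum (fun v _ =>
            (Submodule.finrank_map_le _ _).trans (hTbound (w v)))
      _ = s * ∑ v ∈ Bf, w v := by rw [Finset.mul_sum]
  rw [hrankZ, hrankG]
  exact hZfin.trans (Nat.mul_le_mul_left s hGge)
end

section
/- Let k ≤ d and let Q₁₁, R₁₁ be k×k, Q₁₂, R₁₂ be k×(d−k), Q₂₁, R₂₁ be (d−k)×k, and Q₂₂, R₂₂ be (d−k)×(d−k) complex matrices. Let N₁₁ = fromBlocks I_k 0 0 0 (the d×d matrix with identity in the top-left k×k corner and zeros elsewhere), Q = fromBlocks Q₁₁ Q₁₂ Q₂₁ Q₂₂, and R = fromBlocks R₁₁ R₁₂ R₂₁ R₂₂, and let N = fromBlocks N₁₁ Q R N₁₁ (a 2d×2d matrix). Then rank(N) ≥ k + rank(the d×(d−k) block column [R₁₂; R₂₂] formed by stacking R₁₂ on top of R₂₂) + rank(the (d−k)×d block row [Q₂₁ Q₂₂] formed by concatenating Q₂₁ and Q₂₂). -/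
open Matrix Module

lemma finrank_map_add_finrank_inf_ker {K F G : Type*} [Field K] [AddCommGroup F] [Module K F]
    [AddCommGroup G] [Module K G] (p : Submodule K F) [FiniteDimensional K p]
    (π : F →ₗ[K] G) :
    finrank K (p.map π) + finrank K (p ⊓ LinearMap.ker π : Submodule K F) = finrank K p := by
  have h := LinearMap.finrank_range_add_finrank_ker (π.comp p.subtype)
  rw [LinearMap.range_comp, Submodule.range_subtype] at h
  rw [← h]
  congr 1
  rw [LinearMap.ker_comp, ← Submodule.finrank_map_subtype_eq p, Submodule.map_comap_subtype]

lemma aux14 {m m' n n' : Type*} [Fintype m] [Fintype m'] [Fintype n] [Fintype n']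
    (B : Matrix m n' ℂ) (C : Matrix m' n ℂ) (D : Matrix m' n' ℂ) :
    B.rank + C.rank ≤ (fromBlocks 0 B C D).rank := by
  set M := fromBlocks 0 B C D with hM
  set V := LinearMap.range M.mulVecLin with hV
  set π₁ : ((m ⊕ m') → ℂ) →ₗ[ℂ] (m → ℂ) := LinearMap.funLeft ℂ ℂ Sum.inl with hπ₁
  set π₂ : ((m ⊕ m') → ℂ) →ₗ[ℂ] (m' → ℂ) := LinearMap.funLeft ℂ ℂ Sum.inr with hπ₂
  have key := finrank_map_add_finrank_inf_ker V π₁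
  have hmap : V.map π₁ = LinearMap.range B.mulVecLin := by
    apply le_antisymm
    · rintro x ⟨v, ⟨y, rfl⟩, rfl⟩
      refine ⟨y ∘ Sum.inr, ?_⟩
      ext i
      simp [π₁, M, mulVecLin_apply, mulVec, dotProduct, Fintype.sum_sum_type]
    · rintro x ⟨y, rfl⟩
      refine ⟨M.mulVec (Sum.elim 0 y), ⟨Sum.elim 0 y, rfl⟩, ?_⟩
      ext i
      simp [π₁, M, mulVecLin_apply, mulVec, dotProduct, Fintype.sum_sum_type]
  have hC : C.rank ≤ finrank ℂ (V ⊓ LinearMap.ker π₁ : Submodule ℂ ((m ⊕ m') → ℂ)) := by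
    have hle : LinearMap.range C.mulVecLin ≤ (V ⊓ LinearMap.ker π₁).map π₂ := by
      rintro x ⟨y, rfl⟩
      refine ⟨M.mulVec (Sum.elim y 0), ⟨⟨Sum.elim y 0, rfl⟩, ?_⟩, ?_⟩
      · ext i
        simp [π₁, M, mulVec, dotProduct, Fintype.sum_sum_type]
      · ext i
        simp [π₂, M, mulVecLin_apply, mulVec, dotProduct, Fintype.sum_sum_type]
    calc C.rank = finrank ℂ (LinearMap.range C.mulVecLin) := rfl
      _ ≤ finrank ℂ ((V ⊓ LinearMap.ker π₁).map π₂) := Submodule.finrank_mono hle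
      _ ≤ finrank ℂ (V ⊓ LinearMap.ker π₁ : Submodule ℂ ((m ⊕ m') → ℂ)) :=
          Submodule.finrank_map_le _ _
  have hB : finrank ℂ (V.map π₁) = B.rank := by rw [hmap]; rfl
  have : M.rank = finrank ℂ V := rfl
  omega

lemma rank_reindex'' {k m l n : Type*} [Fintype l] [Fintype n]
    (e₁ : k ≃ m) (e₂ : l ≃ n) (A : Matrix k l ℂ) :
    (Matrix.reindex e₁ e₂ A).rank = A.rank := by
  rw [Matrix.rank, Matrix.rank, Matrix.mulVecLin_reindex, LinearMap.range_comp,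
    LinearMap.range_comp, LinearEquiv.range, Submodule.map_top, LinearEquiv.finrank_map_eq]

lemma rank_submatrix'' {m n m' n' : Type*} [Fintype n] [Fintype n'] [Fintype m] [Fintype m']
    (A : Matrix m n ℂ) (e₁ : m' ≃ m) (e₂ : n' ≃ n) :
    (A.submatrix e₁ e₂).rank = A.rank := by
  simpa only [Matrix.reindex_apply, Equiv.symm_symm] using rank_reindex'' e₁.symm e₂.symm A

set_option maxHeartbeats 2000000 in
theorem stmt14 (k d : ℕ) (hkd : k ≤ d)
    (Q₁₁ R₁₁ : Matrix (Fin k) (Fin k) ℂ)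
    (Q₁₂ R₁₂ : Matrix (Fin k) (Fin (d - k)) ℂ)
    (Q₂₁ R₂₁ : Matrix (Fin (d - k)) (Fin k) ℂ)
    (Q₂₂ R₂₂ : Matrix (Fin (d - k)) (Fin (d - k)) ℂ) :
    k + (Matrix.fromRows R₁₂ R₂₂).rank + (Matrix.fromCols Q₂₁ Q₂₂).rank ≤
      (Matrix.fromBlocks
        (Matrix.fromBlocks (1 : Matrix (Fin k) (Fin k) ℂ) 0 0 0)
        (Matrix.fromBlocks Q₁₁ Q₁₂ Q₂₁ Q₂₂)
        (Matrix.fromBlocks R₁₁ R₁₂ R₂₁ R₂₂)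
        (Matrix.fromBlocks (1 : Matrix (Fin k) (Fin k) ℂ) 0 0 0)).rank := by
  set N₁₁ : Matrix (Fin k ⊕ Fin (d - k)) (Fin k ⊕ Fin (d - k)) ℂ := fromBlocks 1 0 0 0 with hN₁₁
  set Q : Matrix (Fin k ⊕ Fin (d - k)) (Fin k ⊕ Fin (d - k)) ℂ := fromBlocks Q₁₁ Q₁₂ Q₂₁ Q₂₂ with hQ
  set R : Matrix (Fin k ⊕ Fin (d - k)) (Fin k ⊕ Fin (d - k)) ℂ := fromBlocks R₁₁ R₁₂ R₂₁ R₂₂ with hR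
  set N : Matrix ((Fin k ⊕ Fin (d - k)) ⊕ (Fin k ⊕ Fin (d - k))) ((Fin k ⊕ Fin (d - k)) ⊕ (Fin k ⊕ Fin (d - k))) ℂ := fromBlocks N₁₁ Q R N₁₁ with hN
  set L : Matrix ((Fin k ⊕ Fin (d - k)) ⊕ (Fin k ⊕ Fin (d - k))) ((Fin k ⊕ Fin (d - k)) ⊕ (Fin k ⊕ Fin (d - k))) ℂ :=
    fromBlocks 1 0 (fromBlocks (-R₁₁) 0 (-R₂₁) 0) 1 with hL
  set U : Matrix ((Fin k ⊕ Fin (d - k)) ⊕ (Fin k ⊕ Fin (d - k))) ((Fin k ⊕ Fin (d - k)) ⊕ (Fin k ⊕ Fin (d - k))) ℂ :=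
    fromBlocks 1 (fromBlocks (-Q₁₁) (-Q₁₂) 0 0) 0 1 with hU
  set D₀ : Matrix (Fin k ⊕ Fin (d - k)) (Fin k ⊕ Fin (d - k)) ℂ :=
    fromBlocks (1 - R₁₁ * Q₁₁) (-(R₁₁ * Q₁₂)) (-(R₂₁ * Q₁₁)) (-(R₂₁ * Q₁₂)) with hD₀
  set W : Matrix (Fin (d - k) ⊕ (Fin k ⊕ Fin (d - k))) (Fin (d - k) ⊕ (Fin k ⊕ Fin (d - k))) ℂ :=
    fromBlocks 0 (fromCols Q₂₁ Q₂₂) (fromRows R₁₂ R₂₂) D₀ with hW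
  have hLNU : L * N * U =
      fromBlocks N₁₁ (fromBlocks 0 0 Q₂₁ Q₂₂) (fromBlocks 0 R₁₂ 0 R₂₂) D₀ := by
    rw [hL, hN, hU, hN₁₁, hQ, hR, hD₀]
    simp [fromBlocks_multiply, fromBlocks_add, Matrix.mul_one, Matrix.one_mul,
      Matrix.mul_zero, Matrix.zero_mul, sub_eq_neg_add]
  have hdetL : IsUnit L.det := by
    rw [hL, Matrix.det_fromBlocks_zero₁₂]
    simp
  have hdetU : IsUnit U.det := by
    rw [hU, Matrix.det_fromBlocks_zero₂₁]
    simp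
  have hrank1 : (L * N * U).rank = N.rank := by
    rw [Matrix.rank_mul_eq_left_of_isUnit_det U (L * N) hdetU,
      Matrix.rank_mul_eq_right_of_isUnit_det L N hdetL]
  -- reindexing
  have hsub : fromBlocks N₁₁ (fromBlocks 0 0 Q₂₁ Q₂₂) (fromBlocks 0 R₁₂ 0 R₂₂) D₀ =
      (fromBlocks (1 : Matrix (Fin k) (Fin k) ℂ) 0 0 W).submatrix
        (Equiv.sumAssoc (Fin k) (Fin (d - k)) (Fin k ⊕ Fin (d - k))) (Equiv.sumAssoc (Fin k) (Fin (d - k)) (Fin k ⊕ Fin (d - k))) := by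
    ext i j
    rcases i with (a | b) | x <;> rcases j with (a' | b') | y <;>
      first
        | (rcases x with a2 | b2 <;> rcases y with a2' | b2' <;>
            simp [hW, hN₁₁, hD₀, Matrix.one_apply, fromRows_apply_inl, fromRows_apply_inr, fromCols])
        | (try rcases x with a2 | b2) <;> (try rcases y with a2' | b2') <;>
            simp [hW, hN₁₁, hD₀, Matrix.one_apply, fromRows_apply_inl, fromRows_apply_inr, fromCols]
  have hrank2 : (fromBlocks (1 : Matrix (Fin k) (Fin k) ℂ) 0 0 W).rank =
      ((fromBlocks (1 : Matrix (Fin k) (Fin k) ℂ) 0 0 W).submatrix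
        (Equiv.sumAssoc (Fin k) (Fin (d - k)) (Fin k ⊕ Fin (d - k))) (Equiv.sumAssoc (Fin k) (Fin (d - k)) (Fin k ⊕ Fin (d - k)))).rank :=
    (rank_submatrix'' _ _ _).symm
  have hswap : fromBlocks (1 : Matrix (Fin k) (Fin k) ℂ) 0 0 W =
      (fromBlocks 0 (1 : Matrix (Fin k) (Fin k) ℂ) W 0).submatrix (Equiv.refl _)
        (Equiv.sumComm (Fin k) (Fin (d - k) ⊕ (Fin k ⊕ Fin (d - k)))) := by
    ext i j
    rcases i with a | x <;> rcases j with a' | y <;> rfl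
  have hrank3 : (fromBlocks 0 (1 : Matrix (Fin k) (Fin k) ℂ) W 0).rank =
      ((fromBlocks 0 (1 : Matrix (Fin k) (Fin k) ℂ) W 0).submatrix (Equiv.refl _)
        (Equiv.sumComm (Fin k) (Fin (d - k) ⊕ (Fin k ⊕ Fin (d - k))))).rank :=
    (rank_submatrix'' _ _ _).symm
  have h1 : (1 : Matrix (Fin k) (Fin k) ℂ).rank + W.rank ≤ (fromBlocks 0 (1 : Matrix (Fin k) (Fin k) ℂ) W 0).rank :=
    aux14 _ _ _
  have h2 : (fromCols Q₂₁ Q₂₂).rank + (fromRows R₁₂ R₂₂).rank ≤ W.rank := by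
    rw [hW]; exact aux14 _ _ _
  have hone : (1 : Matrix (Fin k) (Fin k) ℂ).rank = k := by simp
  have hNrank : N.rank = (fromBlocks (1 : Matrix (Fin k) (Fin k) ℂ) 0 0 W).rank := by
    rw [← hrank1, hLNU, hsub, ← hrank2]
  rw [hNrank, hswap, ← hrank3]
  omega
end

section
/- Let k ≤ d and let Q₁₁, R₁₁ be k×k, Q₁₂, R₁₂ be k×(d−k), Q₂₁, R₂₁ be (d−k)×k, and Q₂₂, R₂₂ be (d−k)×(d−k) complex matrices. Let N₁₁ = fromBlocks I_k 0 0 0 (the d×d matrix with identity in the top-left k×k corner and zeros elsewhere), Q = fromBlocks Q₁₁ Q₁₂ Q₂₁ Q₂₂, and R = fromBlocks R₁₁ R₁₂ R₂₁ R₂₂. Then the matrix N^Γ = fromBlocks N₁₁ R Q N₁₁ (the partial transpose of N = fromBlocks N₁₁ Q R N₁₁, obtained by swapping the off-diagonal d×d blocks) satisfies rank(N^Γ) ≤ 2k + rank(the d×(d−k) block column [R₁₂; R₂₂] formed by stacking R₁₂ on top of R₂₂) + rank(the d×(d−k) block column [Q₁₂; Q₂₂] formed by stacking Q₁₂ on top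 of Q₂₂). -/
open Matrix

theorem stmt15 (k d : ℕ) (hkd : k ≤ d)
    (Q₁₁ R₁₁ : Matrix (Fin k) (Fin k) ℂ)
    (Q₁₂ R₁₂ : Matrix (Fin k) (Fin (d - k)) ℂ)
    (Q₂₁ R₂₁ : Matrix (Fin (d - k)) (Fin k) ℂ)
    (Q₂₂ R₂₂ : Matrix (Fin (d - k)) (Fin (d - k)) ℂ) :
    (Matrix.fromBlocks
        (Matrix.fromBlocks (1 : Matrix (Fin k) (Fin k) ℂ) 0 0 0)
        (Matrix.fromBlocks R₁₁ R₁₂ R₂₁ R₂₂)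
        (Matrix.fromBlocks Q₁₁ Q₁₂ Q₂₁ Q₂₂)
        (Matrix.fromBlocks (1 : Matrix (Fin k) (Fin k) ℂ) 0 0 0)).rank ≤
      2 * k + (Matrix.fromRows R₁₂ R₂₂).rank + (Matrix.fromRows Q₁₂ Q₂₂).rank := by
  set ι := (Fin k ⊕ Fin (d - k)) ⊕ (Fin k ⊕ Fin (d - k))
  -- four column-group pieces
  set C1 : Matrix ι ι ℂ :=
    fromBlocks (fromBlocks 1 0 0 0) 0 (fromBlocks Q₁₁ 0 Q₂₁ 0) 0 with hC1
  set C2 : Matrix ι ι ℂ :=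
    fromBlocks 0 0 (fromBlocks 0 Q₁₂ 0 Q₂₂) 0 with hC2
  set C3 : Matrix ι ι ℂ :=
    fromBlocks 0 (fromBlocks R₁₁ 0 R₂₁ 0) 0 (fromBlocks 1 0 0 0) with hC3
  set C4 : Matrix ι ι ℂ :=
    fromBlocks 0 (fromBlocks 0 R₁₂ 0 R₂₂) 0 0 with hC4
  have hsum : (Matrix.fromBlocks
        (Matrix.fromBlocks (1 : Matrix (Fin k) (Fin k) ℂ) 0 0 0)
        (Matrix.fromBlocks R₁₁ R₁₂ R₂₁ R₂₂)
        (Matrix.fromBlocks Q₁₁ Q₁₂ Q₂₁ Q₂₂)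
        (Matrix.fromBlocks (1 : Matrix (Fin k) (Fin k) ℂ) 0 0 0))
      = C1 + C2 + C3 + C4 := by
    ext (i | i) (j | j) <;> rcases i with i | i <;> rcases j with j | j <;>
      simp [hC1, hC2, hC3, hC4, Matrix.fromBlocks, Matrix.add_apply]
  -- rank bound for C1
  have hb1 : C1.rank ≤ k := by
    have hfac : C1 = (fromRows (fromRows 1 0) (fromRows Q₁₁ Q₂₁)) *
        (fromCols (fromCols (1 : Matrix (Fin k) (Fin k) ℂ) 0) 0) := by
      ext (i | i) (j | j) <;> rcases i with i | i <;> rcases j with j | j <;>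
        simp [Matrix.mul_apply, Matrix.fromRows_apply_inl, Matrix.fromRows_apply_inr, Matrix.fromCols, Matrix.fromBlocks,
          Matrix.one_apply, Finset.sum_ite_eq, Matrix.of_apply, hC1]
    calc C1.rank ≤ (fromCols (fromCols (1 : Matrix (Fin k) (Fin k) ℂ) 0) 0).rank := by
          rw [hfac]; exact Matrix.rank_mul_le_right _ _
      _ ≤ Fintype.card (Fin k) := Matrix.rank_le_card_height _
      _ = k := Fintype.card_fin k
  have hb3 : C3.rank ≤ k := by
    have hfac : C3 = (fromRows (fromRows R₁₁ R₂₁) (fromRows 1 0)) *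
        (fromCols 0 (fromCols (1 : Matrix (Fin k) (Fin k) ℂ) 0)) := by
      ext (i | i) (j | j) <;> rcases i with i | i <;> rcases j with j | j <;>
        simp [Matrix.mul_apply, Matrix.fromRows_apply_inl, Matrix.fromRows_apply_inr, Matrix.fromCols, Matrix.fromBlocks,
          Matrix.one_apply, Finset.sum_ite_eq, Matrix.of_apply, hC3]
    calc C3.rank ≤ (fromCols 0 (fromCols (1 : Matrix (Fin k) (Fin k) ℂ) 0)).rank := by
          rw [hfac]; exact Matrix.rank_mul_le_right _ _
      _ ≤ Fintype.card (Fin k) := Matrix.rank_le_card_height _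
      _ = k := Fintype.card_fin k
  have hb2 : C2.rank ≤ (Matrix.fromRows Q₁₂ Q₂₂).rank := by
    have hfac : C2 = (fromRows (0 : Matrix (Fin k ⊕ Fin (d - k)) (Fin k ⊕ Fin (d - k)) ℂ) 1) *
        ((fromRows Q₁₂ Q₂₂) * (fromCols (fromCols 0 (1 : Matrix (Fin (d - k)) (Fin (d - k)) ℂ)) 0)) := by
      ext (i | i) (j | j) <;> rcases i with i | i <;> rcases j with j | j <;>
        simp [Matrix.mul_apply, Matrix.fromRows_apply_inl, Matrix.fromRows_apply_inr, Matrix.fromCols, Matrix.fromBlocks,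
          Matrix.one_apply, Finset.sum_ite_eq, Matrix.of_apply, hC2, Fintype.sum_sum_type]
    calc C2.rank ≤ ((fromRows Q₁₂ Q₂₂) * (fromCols (fromCols 0 1) 0)).rank := by
          rw [hfac]; exact Matrix.rank_mul_le_right _ _
      _ ≤ (fromRows Q₁₂ Q₂₂).rank := Matrix.rank_mul_le_left _ _
  have hb4 : C4.rank ≤ (Matrix.fromRows R₁₂ R₂₂).rank := by
    have hfac : C4 = (fromRows (1 : Matrix (Fin k ⊕ Fin (d - k)) (Fin k ⊕ Fin (d - k)) ℂ) 0) *
        ((fromRows R₁₂ R₂₂) * (fromCols 0 (fromCols 0 (1 : Matrix (Fin (d - k)) (Fin (d - k)) ℂ)))) := by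
      ext (i | i) (j | j) <;> rcases i with i | i <;> rcases j with j | j <;>
        simp [Matrix.mul_apply, Matrix.fromRows_apply_inl, Matrix.fromRows_apply_inr, Matrix.fromCols, Matrix.fromBlocks,
          Matrix.one_apply, Finset.sum_ite_eq, Matrix.of_apply, hC4, Fintype.sum_sum_type]
    calc C4.rank ≤ ((fromRows R₁₂ R₂₂) * (fromCols 0 (fromCols 0 1))).rank := by
          rw [hfac]; exact Matrix.rank_mul_le_right _ _
      _ ≤ (fromRows R₁₂ R₂₂).rank := Matrix.rank_mul_le_left _ _
  rw [hsum]
  calc (C1 + C2 + C3 + C4).rank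
      ≤ (C1 + C2 + C3).rank + C4.rank := my_rank_add_le _ _
    _ ≤ ((C1 + C2).rank + C3.rank) + C4.rank := by
        exact Nat.add_le_add_right (my_rank_add_le _ _) _
    _ ≤ ((C1.rank + C2.rank) + C3.rank) + C4.rank := by
        exact Nat.add_le_add_right (Nat.add_le_add_right (my_rank_add_le _ _) _) _
    _ ≤ ((k + (Matrix.fromRows Q₁₂ Q₂₂).rank) + k) + (Matrix.fromRows R₁₂ R₂₂).rank :=
        add_le_add (add_le_add (add_le_add hb1 hb2) hb3) hb4
    _ = 2 * k + (Matrix.fromRows R₁₂ R₂₂).rank + (Matrix.fromRows Q₁₂ Q₂₂).rank := by ring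
end
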